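/- Let D, L ≥ 1, N = DL+1, K a multiple of D with K ≥ D. With f^T = 1^T M^{K−D} and g^T = 1^T (I+M)^{K−D} for the matrix M defined from β_j = DL/C(D,j), the rate R = D·L/(N − max_j f_j/g_j) equals (1 − 1/N)/(1 − 1/N^{K/D}). -/

import Mathlib

/-!
The last standard row vector is cyclic for `M`: `e_{D-1}ᵀ M^k = C(D,k)⁻¹ e_{D-1-k}ᵀ` for `k < D`,
and `e_{D-1}ᵀ M^D = (DL)⁻¹ 1ᵀ`. So `∑_{k<D} C(D,k) M^k - DL • M^D`, a polynomial in `M`, has a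
zero row at a cyclic vector and hence vanishes; equivalently `(1 + M)^D = N • M^D` with
`N = DL + 1`. Writing `K - D = Dq`, this gives `g = N^q f` with `f > 0`, so every ratio
`f_j / g_j` equals `N^{-q}`, and `DL / (N - N^{-q}) = (1 - 1/N) / (1 - 1/N^{q+1})`.
-/

open Matrix Finset

/-- β_j = D·L / C(D,j). -/
noncomputable def betaPIR (D L j : ℕ) : ℝ := (D * L : ℝ) / (D.choose j : ℝ)

/-- The D×D matrix M: first row all 1/β₁, subdiagonal entries β_j/β_{j+1}, zeros elsewhere. -/
noncomputable def Mpir (D L : ℕ) : Matrix (Fin D) (Fin D) ℝ :=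
  Matrix.of fun i j =>
    if i.val = 0 then 1 / betaPIR D L 1
    else if i.val = j.val + 1 then betaPIR D L (j.val + 1) / betaPIR D L (j.val + 2)
    else 0

namespace Matrix

variable {ι R : Type*} [Fintype ι] [DecidableEq ι]

theorem eq_zero_of_commute_of_row_eq_zero [Ring R] [NoZeroDivisors R] {M P : Matrix ι ι R}
    (hPM : Commute P M) {i₀ : ι} (hP : P i₀ = 0)
    (hcyclic : ∀ j, ∃ (r : ℕ) (c : R), c ≠ 0 ∧ (M ^ r) i₀ = c • Pi.single j 1) : P = 0 := by
  ext j k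
  obtain ⟨r, c, hc, hrow⟩ := hcyclic j
  have h : c * P j k = 0 := by
    calc c * P j k = (M ^ r * P) i₀ k := by
          rw [mul_apply_eq_vecMul, hrow, smul_vecMul, single_one_vecMul]; rfl
      _ = (P * M ^ r) i₀ k := by rw [(hPM.pow_right r).eq]
      _ = 0 := by simp [mul_apply_eq_vecMul, hP]
  exact (mul_eq_zero.mp h).resolve_left hc

theorem sum_pow_apply_pos [Semiring R] [PartialOrder R] [IsStrictOrderedRing R]
    {M : Matrix ι ι R} (hM : ∀ i j, 0 ≤ M i j) {i₀ : ι} (hi₀ : ∀ j, 0 < M i₀ j) (m : ℕ) (j : ι) :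
    0 < ∑ i, (M ^ m) i j := by
  induction m generalizing j with
  | zero => simp [one_apply]
  | succ m ih =>
    have hsum : ∑ i, (M ^ (m + 1)) i j = ∑ k, (∑ i, (M ^ m) i k) * M k j := by
      simp only [pow_succ, mul_apply, Finset.sum_mul]
      exact Finset.sum_comm
    rw [hsum]
    exact Finset.sum_pos' (fun k _ => mul_nonneg (ih k).le (hM k j))
      ⟨i₀, Finset.mem_univ _, mul_pos (ih i₀) (hi₀ j)⟩

end Matrix

theorem betaPIR_div_betaPIR {D L : ℕ} (hDL : (D * L : ℝ) ≠ 0) (a b : ℕ) :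
    betaPIR D L a / betaPIR D L b = D.choose b / D.choose a :=
  div_div_div_cancel_left' _ _ hDL

theorem Mpir_nonneg (D L : ℕ) (i j : Fin D) : 0 ≤ Mpir D L i j := by
  unfold Mpir betaPIR
  simp only [of_apply]
  split_ifs <;> positivity

theorem Mpir_row_zero (n L : ℕ) : Mpir (n + 1) L 0 = fun _ => (L : ℝ)⁻¹ := by
  ext j
  simp only [Mpir, of_apply, Fin.val_zero, if_true]
  rw [betaPIR, Nat.choose_one_right, one_div, inv_div, div_mul_cancel_left₀ (by positivity)]

theorem Mpir_row_succ {n L : ℕ} (hL : L ≠ 0) (t : Fin n) :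
    Mpir (n + 1) L t.succ =
      ((n + 1).choose (t + 2) / (n + 1).choose (t + 1) : ℝ) • Pi.single t.castSucc 1 := by
  ext j
  have hDL : ((n + 1 : ℕ) * L : ℝ) ≠ 0 := by positivity
  by_cases hj : j = t.castSucc
  · subst hj
    simp [Mpir, betaPIR_div_betaPIR hDL]
  · have hval : (t : ℕ) ≠ j := fun h => hj (Fin.ext h.symm)
    simp [Mpir, hj, hval]

theorem Mpir_pow_row_last {n L : ℕ} (hL : L ≠ 0) (k : Fin (n + 1)) :
    (Mpir (n + 1) L ^ (k : ℕ)) (Fin.last n) =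
      ((n + 1).choose k : ℝ)⁻¹ • Pi.single k.rev 1 := by
  obtain ⟨k, hk⟩ := k
  induction k with
  | zero =>
    ext j
    simp [one_apply, Pi.single_apply, eq_comm]
  | succ k ih =>
    let t : Fin n := ⟨n - (k + 1), by omega⟩
    have htval : (t : ℕ) = n - (k + 1) := rfl
    have ht : t.succ = Fin.rev ⟨k, by omega⟩ :=
      Fin.ext (by simp only [Fin.val_succ, Fin.val_rev]; omega)
    have ht' : t.castSucc = Fin.rev ⟨k + 1, hk⟩ :=
      Fin.ext (by simp only [Fin.val_castSucc, Fin.val_rev]; omega)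
    rw [pow_succ, mul_apply_eq_vecMul, ih (by omega), smul_vecMul, single_one_vecMul, ← ht,
      row, Mpir_row_succ hL, smul_smul, ht']
    congr 1
    have hsymm₁ : (n + 1).choose (t + 2) = (n + 1).choose k := by
      rw [← Nat.choose_symm (by omega)]; congr 1; omega
    have hsymm₂ : (n + 1).choose (t + 1) = (n + 1).choose (k + 1) := by
      rw [← Nat.choose_symm (by omega)]; congr 1; omega
    have hpos : ((n + 1).choose k : ℝ) ≠ 0 := by exact_mod_cast (Nat.choose_pos (by omega)).ne'
    rw [hsymm₁, hsymm₂]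
    field_simp

theorem Mpir_pow_succ_row_last {n L : ℕ} (hL : L ≠ 0) :
    (Mpir (n + 1) L ^ (n + 1)) (Fin.last n) = fun _ => (((n + 1 : ℕ) : ℝ) * L)⁻¹ := by
  rw [pow_succ, mul_apply_eq_vecMul, ← Fin.val_last n, Mpir_pow_row_last hL, smul_vecMul,
    single_one_vecMul, Fin.rev_last, row, Mpir_row_zero]
  ext
  simp [mul_comm]

theorem sum_choose_smul_Mpir_pow {n L : ℕ} (hL : L ≠ 0) :
    ∑ k ∈ range (n + 1), ((n + 1).choose k : ℝ) • Mpir (n + 1) L ^ k =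
      (((n + 1 : ℕ) : ℝ) * L) • Mpir (n + 1) L ^ (n + 1) := by
  have hcoeff (k : Fin (n + 1)) : ((n + 1).choose k : ℝ) ≠ 0 := by
    exact_mod_cast (Nat.choose_pos k.isLt.le).ne'
  have hsum (j : Fin (n + 1)) : ∑ k : Fin (n + 1), (Pi.single k.rev 1 : Fin (n + 1) → ℝ) j = 1 := by
    simp [Pi.single_apply, eq_comm (a := j), Fin.rev_eq_iff]
  rw [← sub_eq_zero, ← Fin.sum_univ_eq_sum_range fun k => ((n + 1).choose k : ℝ) • _ ^ k]
  refine eq_zero_of_commute_of_row_eq_zero (M := Mpir (n + 1) L) (i₀ := Fin.last n) ?_ ?_ ?_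
  · refine Commute.sub_left (Commute.sum_left _ _ _ fun k _ => ?_) ?_ <;>
      exact ((Commute.refl _).pow_left _).smul_left _
  · have hDL : ((n + 1 : ℕ) : ℝ) * L ≠ 0 := by positivity
    ext k
    simp [Matrix.sum_apply, Mpir_pow_row_last hL, hcoeff, hsum, mul_inv_cancel₀ hDL,
      Mpir_pow_succ_row_last hL, -Nat.cast_add, -_root_.mul_inv_rev]
  · intro j
    refine ⟨j.rev, _, inv_ne_zero (hcoeff j.rev), ?_⟩
    simpa using Mpir_pow_row_last hL j.rev

theorem one_add_Mpir_pow {n L : ℕ} (hL : L ≠ 0) :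
    (1 + Mpir (n + 1) L) ^ (n + 1) = (((n + 1 : ℕ) : ℝ) * L + 1) • Mpir (n + 1) L ^ (n + 1) := by
  have hterm (m : ℕ) : Mpir (n + 1) L ^ m * 1 ^ (n + 1 - m) * ((n + 1).choose m : Matrix _ _ ℝ) =
      ((n + 1).choose m : ℝ) • Mpir (n + 1) L ^ m := by
    rw [one_pow, mul_one, ← nsmul_eq_mul', Nat.cast_smul_eq_nsmul]
  rw [add_comm (1 : Matrix _ _ ℝ), (Commute.one_right _).add_pow, Finset.sum_range_succ,
    Finset.sum_congr rfl fun m _ => hterm m, sum_choose_smul_Mpir_pow hL, hterm, Nat.choose_self,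
    Nat.cast_one, one_smul, add_smul, one_smul]

theorem div_add_one_sub_inv_pow_eq {K : Type*} [Field K] {a : K} (ha : a + 1 ≠ 0) (q : ℕ) :
    a / (a + 1 - ((a + 1) ^ q)⁻¹) = (1 - 1 / (a + 1)) / (1 - 1 / (a + 1) ^ (q + 1)) := by
  rw [← mul_div_mul_left (1 - 1 / (a + 1)) _ ha]
  congr 1
  · field_simp
    ring
  · field_simp
    ring

theorem rate_achieves_capacity_general (D L K : ℕ) (hD : 1 ≤ D) (hL : 1 ≤ L) (hDK : D ∣ K) (hK : D ≤ K)
    (f g : Fin D → ℝ)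
    (hf : ∀ j, f j = ∑ i, ((Mpir D L) ^ (K - D)) i j)
    (hg : ∀ j, g j = ∑ i, ((1 + Mpir D L) ^ (K - D)) i j)
    (jstar : Fin D) :
    (D * L : ℝ) / ((D * L + 1 : ℝ) - f jstar / g jstar) =
      (1 - 1 / (D * L + 1 : ℝ)) / (1 - 1 / (D * L + 1 : ℝ) ^ (K / D)) := by
  obtain ⟨n, rfl⟩ : ∃ n, D = n + 1 := ⟨D - 1, by omega⟩
  obtain ⟨c, rfl⟩ := hDK
  obtain ⟨q, rfl⟩ : ∃ q, c = q + 1 := Nat.exists_eq_succ_of_ne_zero (by rintro rfl; simp at hK)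
  have hL₀ : L ≠ 0 := by omega
  have hN : ((n + 1 : ℕ) : ℝ) * L + 1 ≠ 0 := by positivity
  have hpow : (1 + Mpir (n + 1) L) ^ ((n + 1) * (q + 1) - (n + 1)) =
      ((((n + 1 : ℕ) : ℝ) * L + 1) ^ q) • Mpir (n + 1) L ^ ((n + 1) * (q + 1) - (n + 1)) := by
    rw [Nat.mul_succ, Nat.add_sub_cancel, pow_mul, pow_mul, one_add_Mpir_pow hL₀, smul_pow]
  have hgf : g jstar = (((n + 1 : ℕ) : ℝ) * L + 1) ^ q * f jstar := by
    simp [hg, hf, hpow, Finset.mul_sum]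
  have hf_pos : 0 < f jstar := hf jstar ▸ sum_pow_apply_pos (Mpir_nonneg _ _) (i₀ := 0)
    (fun _ => by simpa [Mpir_row_zero] using Nat.pos_of_ne_zero hL₀) _ _
  rw [hgf, div_mul_cancel_right₀ hf_pos.ne', Nat.mul_div_cancel_left _ n.succ_pos]
  exact div_add_one_sub_inv_pow_eq hN q

theorem rate_achieves_capacity (D L K : ℕ) (hD : 1 ≤ D) (hL : 1 ≤ L) (hDK : D ∣ K) (hK : D ≤ K)
    (f g : Fin D → ℝ)
    (hf : ∀ j, f j = ∑ i, ((Mpir D L) ^ (K - D)) i j)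
    (hg : ∀ j, g j = ∑ i, ((1 + Mpir D L) ^ (K - D)) i j)
    (jstar : Fin D) (hmax : ∀ j, f j / g j ≤ f jstar / g jstar) :
    (D * L : ℝ) / ((D * L + 1 : ℝ) - f jstar / g jstar) =
      (1 - 1 / (D * L + 1 : ℝ)) / (1 - 1 / (D * L + 1 : ℝ) ^ (K / D)) :=
  rate_achieves_capacity_general D L K hD hL hDK hK f g hf hg jstar
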